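/- arXiv:math/0507178 — 6 statements merged into one kernel-verified Lean document; each statement's English description precedes it below -/
import Mathlib

section
/- If Q(t) is a family of irreducible matrices with positive entries, each entry being a log-convex function of the real parameter t, then the Perron–Frobenius eigenvalue Z(Q(t)) is a log-convex function of t. -/
open Filter Matrix

/-- Hölder-type inequality: `∑ F i ^ a * G i ^ b ≤ (∑ F) ^ a * (∑ G) ^ b`. -/
private lemma holder_sum {ι : Type*} (s : Finset ι) (F G : ι → ℝ)
    (hF : ∀ i ∈ s, 0 ≤ F i) (hG : ∀ i ∈ s, 0 ≤ G i)
    {a b : ℝ} (ha : 0 ≤ a) (hb : 0 ≤ b) (hab : a + b = 1)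
    (hA : 0 < ∑ i ∈ s, F i) (hB : 0 < ∑ i ∈ s, G i) :
    ∑ i ∈ s, (F i) ^ a * (G i) ^ b ≤ (∑ i ∈ s, F i) ^ a * (∑ i ∈ s, G i) ^ b := by
  set A := ∑ i ∈ s, F i with hAdef
  set B := ∑ i ∈ s, G i with hBdef
  have hAa : (0:ℝ) < A ^ a := Real.rpow_pos_of_pos hA a
  have hBb : (0:ℝ) < B ^ b := Real.rpow_pos_of_pos hB b
  calc ∑ i ∈ s, (F i) ^ a * (G i) ^ b
      ≤ ∑ i ∈ s, (A ^ a * B ^ b) * (a * (F i / A) + b * (G i / B)) := by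
        refine Finset.sum_le_sum fun i hi => ?_
        have h := Real.geom_mean_le_arith_mean2_weighted ha hb
          (div_nonneg (hF i hi) hA.le) (div_nonneg (hG i hi) hB.le) hab
        have heq : (F i / A) ^ a * (G i / B) ^ b
            = (F i) ^ a * (G i) ^ b / (A ^ a * B ^ b) := by
          rw [Real.div_rpow (hF i hi) hA.le, Real.div_rpow (hG i hi) hB.le]
          ring
        rw [heq, div_le_iff₀ (by positivity)] at h
        calc (F i) ^ a * (G i) ^ b
            ≤ (a * (F i / A) + b * (G i / B)) * (A ^ a * B ^ b) := h
          _ = (A ^ a * B ^ b) * (a * (F i / A) + b * (G i / B)) := by ring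
    _ = A ^ a * B ^ b := by
        rw [← Finset.mul_sum]
        have : ∑ i ∈ s, (a * (F i / A) + b * (G i / B)) = 1 := by
          rw [Finset.sum_add_distrib, ← Finset.mul_sum, ← Finset.mul_sum,
            ← Finset.sum_div, ← Finset.sum_div, ← hAdef, ← hBdef,
            div_self hA.ne', div_self hB.ne', mul_one, mul_one, hab]
        rw [this, mul_one]

/-- A finite sum of positive log-convex functions is log-convex. -/
private lemma logConvexOn_sum {ι : Type*} (s : Finset ι) (hs : s.Nonempty) (f : ι → ℝ → ℝ)
    (hpos : ∀ i ∈ s, ∀ t, 0 < f i t)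
    (hconv : ∀ i ∈ s, ConvexOn ℝ Set.univ (fun t => Real.log (f i t))) :
    ConvexOn ℝ Set.univ (fun t => Real.log (∑ i ∈ s, f i t)) := by
  refine ⟨convex_univ, fun x _ y _ a b ha hb hab => ?_⟩
  have hA : 0 < ∑ i ∈ s, f i x := Finset.sum_pos (fun i hi => hpos i hi x) hs
  have hB : 0 < ∑ i ∈ s, f i y := Finset.sum_pos (fun i hi => hpos i hi y) hs
  have hC : 0 < ∑ i ∈ s, f i (a • x + b • y) :=
    Finset.sum_pos (fun i hi => hpos i hi _) hs
  have key : ∑ i ∈ s, f i (a • x + b • y) ≤ (∑ i ∈ s, f i x) ^ a * (∑ i ∈ s, f i y) ^ b := by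
    calc ∑ i ∈ s, f i (a • x + b • y)
        ≤ ∑ i ∈ s, (f i x) ^ a * (f i y) ^ b := by
          refine Finset.sum_le_sum fun i hi => ?_
          have h := (hconv i hi).2 (Set.mem_univ x) (Set.mem_univ y) ha hb hab
          have hfx := hpos i hi x
          have hfy := hpos i hi y
          have hfz := hpos i hi (a • x + b • y)
          have : f i (a • x + b • y) ≤ Real.exp (a • Real.log (f i x) + b • Real.log (f i y)) :=
            (Real.log_le_iff_le_exp hfz).mp h
          calc f i (a • x + b • y)
              ≤ Real.exp (a • Real.log (f i x) + b • Real.log (f i y)) := this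
            _ = (f i x) ^ a * (f i y) ^ b := by
                rw [smul_eq_mul, smul_eq_mul, Real.exp_add,
                  Real.rpow_def_of_pos hfx, Real.rpow_def_of_pos hfy,
                  mul_comm a, mul_comm b]
      _ ≤ (∑ i ∈ s, f i x) ^ a * (∑ i ∈ s, f i y) ^ b :=
          holder_sum s (fun i => f i x) (fun i => f i y)
            (fun i hi => (hpos i hi x).le) (fun i hi => (hpos i hi y).le) ha hb hab hA hB
  calc Real.log (∑ i ∈ s, f i (a • x + b • y))
      ≤ Real.log ((∑ i ∈ s, f i x) ^ a * (∑ i ∈ s, f i y) ^ b) :=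
        Real.log_le_log hC key
    _ = a • Real.log (∑ i ∈ s, f i x) + b • Real.log (∑ i ∈ s, f i y) := by
        rw [Real.log_mul (Real.rpow_pos_of_pos hA a).ne' (Real.rpow_pos_of_pos hB b).ne',
          Real.log_rpow hA, Real.log_rpow hB, smul_eq_mul, smul_eq_mul]

/-- Kingman's theorem: if `Q t` is a family of irreducible matrices with positive
entries, each entry being a log-convex function of `t`, then the Perron–Frobenius
eigenvalue `Z t` (characterized as the eigenvalue admitting a strictly positive
eigenvector) is a log-convex function of `t`. -/
theorem kingman_log_convexity
    {S : Type*} [Fintype S] [Nonempty S]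
    (Q : ℝ → Matrix S S ℝ) (Z : ℝ → ℝ)
    (hpos : ∀ t α β, 0 < Q t α β)
    (hlogconvex : ∀ α β, ConvexOn ℝ Set.univ (fun t => Real.log (Q t α β)))
    (hZpos : ∀ t, 0 < Z t)
    (hZeig : ∀ t, ∃ v : S → ℝ, (∀ i, 0 < v i) ∧ Q t *ᵥ v = Z t • v) :
    ConvexOn ℝ Set.univ (fun t => Real.log (Z t)) := by
  classical
  have : Finset.Nonempty (Finset.univ : Finset S) := Finset.univ_nonempty
  -- positivity of entries of powers
  have hpowpos : ∀ (n : ℕ) (t : ℝ) (α β : S), 0 < (Q t ^ (n + 1)) α β := by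
    intro n
    induction n with
    | zero => intro t α β; simpa using hpos t α β
    | succ n ih =>
      intro t α β
      rw [pow_succ, Matrix.mul_apply]
      exact Finset.sum_pos (fun γ _ => mul_pos (ih t α γ) (hpos t γ β)) Finset.univ_nonempty
  have hpownn : ∀ (n : ℕ) (t : ℝ) (α β : S), 0 ≤ (Q t ^ n) α β := by
    intro n t α β
    cases n with
    | zero => simp [Matrix.one_apply]; positivity
    | succ n => exact (hpowpos n t α β).le
  -- log-convexity of entries of powers
  have hpowconv : ∀ (n : ℕ) (α β : S),
      ConvexOn ℝ Set.univ (fun t => Real.log ((Q t ^ (n + 1)) α β)) := by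
    intro n
    induction n with
    | zero => intro α β; simpa using hlogconvex α β
    | succ n ih =>
      intro α β
      have h := logConvexOn_sum Finset.univ Finset.univ_nonempty
        (fun γ t => (Q t ^ (n + 1)) α γ * Q t γ β)
        (fun γ _ t => mul_pos (hpowpos n t α γ) (hpos t γ β))
        (fun γ _ => by
          have heq : (fun t => Real.log ((Q t ^ (n + 1)) α γ * Q t γ β))
              = fun t => Real.log ((Q t ^ (n + 1)) α γ) + Real.log (Q t γ β) :=
            funext fun t => Real.log_mul (hpowpos n t α γ).ne' (hpos t γ β).ne'
          rw [heq]
          exact (ih α γ).add (hlogconvex γ β))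
      have heq : (fun t => Real.log ((Q t ^ (n + 2)) α β))
          = fun t => Real.log (∑ γ, (Q t ^ (n + 1)) α γ * Q t γ β) :=
        funext fun t => by rw [pow_succ, Matrix.mul_apply]
      rw [heq]
      exact h
  obtain ⟨α⟩ := ‹Nonempty S›
  set g : ℕ → ℝ → ℝ := fun n t => ((n : ℝ) + 1)⁻¹ * Real.log ((Q t ^ (n + 1)) α α) with hg
  have hgconv : ∀ n, ConvexOn ℝ Set.univ (g n) := by
    intro n
    have h := (hpowconv n α α).smul (c := ((n : ℝ) + 1)⁻¹) (by positivity)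
    simpa [hg, Pi.smul_apply, smul_eq_mul] using h
  have hgt : ∀ t, Tendsto (fun n => g n t) atTop (nhds (Real.log (Z t))) := by
    intro t
    obtain ⟨v, hv, heig⟩ := hZeig t
    have heign : ∀ n : ℕ, Q t ^ n *ᵥ v = Z t ^ n • v := by
      intro n
      induction n with
      | zero => simp
      | succ n ih =>
        rw [pow_succ, ← Matrix.mulVec_mulVec, heig, Matrix.mulVec_smul, ih, smul_smul,
          ← pow_succ']
    set P : ℕ → ℝ := fun n => (Q t ^ (n + 1)) α α with hP
    have hsum : ∀ n : ℕ, ∑ β, (Q t ^ n) α β * v β = Z t ^ n * v α := by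
      intro n
      have h := congrFun (heign n) α
      simpa [Matrix.mulVec, dotProduct] using h
    -- upper bound
    have hup : ∀ n, P n ≤ Z t ^ (n + 1) := by
      intro n
      have hle : P n * v α ≤ ∑ β, (Q t ^ (n + 1)) α β * v β :=
        Finset.single_le_sum (f := fun β => (Q t ^ (n + 1)) α β * v β)
          (fun β _ => (mul_pos (hpowpos n t α β) (hv β)).le) (Finset.mem_univ α)
      rw [hsum (n + 1)] at hle
      exact le_of_mul_le_mul_right hle (hv α)
    -- lower bound
    obtain ⟨β₀, -, hβ₀⟩ := Finset.exists_min_image Finset.univ (fun β => Q t β α / v β)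
      Finset.univ_nonempty
    set c : ℝ := Q t β₀ α / v β₀ with hc
    have hcpos : 0 < c := div_pos (hpos t β₀ α) (hv β₀)
    have hcv : ∀ β, c * v β ≤ Q t β α := by
      intro β
      have h := hβ₀ β (Finset.mem_univ β)
      exact (le_div_iff₀ (hv β)).mp h
    have hlow : ∀ n, c * v α * Z t ^ n ≤ P n := by
      intro n
      have hPn : P n = ∑ β, (Q t ^ n) α β * Q t β α := by
        simp [hP, pow_succ, Matrix.mul_apply]
      rw [hPn]
      calc c * v α * Z t ^ n = c * (Z t ^ n * v α) := by ring
        _ = c * ∑ β, (Q t ^ n) α β * v β := by rw [hsum n]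
        _ = ∑ β, (Q t ^ n) α β * (c * v β) := by
            rw [Finset.mul_sum]; exact Finset.sum_congr rfl fun β _ => by ring
        _ ≤ ∑ β, (Q t ^ n) α β * Q t β α :=
            Finset.sum_le_sum fun β _ =>
              mul_le_mul_of_nonneg_left (hcv β) (hpownn n t α β)
    -- squeeze
    have hcva : (0 : ℝ) < c * v α := mul_pos hcpos (hv α)
    have hgup : ∀ n : ℕ, g n t ≤ Real.log (Z t) := by
      intro n
      have h1 : Real.log (P n) ≤ ((n : ℝ) + 1) * Real.log (Z t) := by
        have := Real.log_le_log (hpowpos n t α α) (hup n)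
        rwa [Real.log_pow, Nat.cast_add, Nat.cast_one] at this
      have h2 := mul_le_mul_of_nonneg_left h1 (by positivity : (0:ℝ) ≤ ((n : ℝ) + 1)⁻¹)
      rwa [← mul_assoc, inv_mul_cancel₀ (by positivity : ((n : ℝ) + 1) ≠ 0), one_mul] at h2
    have hglow : ∀ n : ℕ,
        Real.log (Z t) + (Real.log (c * v α) - Real.log (Z t)) / ((n : ℝ) + 1) ≤ g n t := by
      intro n
      have h1 : Real.log (c * v α) + (n : ℝ) * Real.log (Z t) ≤ Real.log (P n) := by
        have h := Real.log_le_log (mul_pos hcva (pow_pos (hZpos t) n)) (hlow n)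
        rwa [Real.log_mul hcva.ne' (pow_pos (hZpos t) n).ne', Real.log_pow] at h
      have h2 := mul_le_mul_of_nonneg_left h1 (by positivity : (0:ℝ) ≤ ((n : ℝ) + 1)⁻¹)
      have h3 : Real.log (Z t) + (Real.log (c * v α) - Real.log (Z t)) / ((n : ℝ) + 1)
          = ((n : ℝ) + 1)⁻¹ * (Real.log (c * v α) + (n : ℝ) * Real.log (Z t)) := by
        field_simp
        ring
      rw [h3]
      exact h2
    have h0 : Tendsto (fun n : ℕ =>
        (Real.log (c * v α) - Real.log (Z t)) / ((n : ℝ) + 1)) atTop (nhds 0) := by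
      have h := (tendsto_const_div_atTop_nhds_zero_nat
        (Real.log (c * v α) - Real.log (Z t))).comp (tendsto_add_atTop_nat 1)
      have heq : (fun n : ℕ => (Real.log (c * v α) - Real.log (Z t)) / ((n : ℝ) + 1))
          = (fun n : ℕ => (Real.log (c * v α) - Real.log (Z t)) / (n : ℝ)) ∘ (· + 1) := by
        funext n; simp [Function.comp]
      rw [heq]
      exact h
    have htendL : Tendsto (fun n : ℕ =>
        Real.log (Z t) + (Real.log (c * v α) - Real.log (Z t)) / ((n : ℝ) + 1)) atTop
        (nhds (Real.log (Z t))) := by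
      simpa using tendsto_const_nhds.add h0
    exact tendsto_of_tendsto_of_tendsto_of_le_of_le htendL tendsto_const_nhds hglow hgup
  refine ⟨convex_univ, fun x _ y _ a b ha hb hab => ?_⟩
  simp only [smul_eq_mul]
  have hineq : ∀ n, g n (a * x + b * y) ≤ a * g n x + b * g n y := by
    intro n
    simpa [smul_eq_mul] using (hgconv n).2 (Set.mem_univ x) (Set.mem_univ y) ha hb hab
  exact le_of_tendsto_of_tendsto' (hgt (a * x + b * y))
    (((hgt x).const_mul a).add ((hgt y).const_mul b)) hineq
end

section
/- Let Q be the transition matrix of an irreducible positive recurrent finite Markov chain with invariant law ν, and for a fixed state γ let Q^{(γ)}_{α,β} := Q_{α,β} 1_{β≠γ}. Then the matrix geometric series (1 − Q^{(γ)})^{-1} = Σ_{k≥0} (Q^{(γ)})^k converges and satisfies [(1 − Q^{(γ)})^{-1}]_{γ,α} = ν_α / ν_γ for every state α. -/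
open Finset Filter Topology

/-- For an irreducible stochastic matrix `Q` on a finite state space with invariant law
`ν`, and `Q^{(γ)}` the matrix `Q` with the `γ` column set to zero, the geometric series
`Σ_k (Q^{(γ)})^k` converges (entrywise) and its `(γ, α)` entry equals `ν α / ν γ`. -/
theorem geometric_series_invariant_law
    {S : Type*} [Fintype S] [DecidableEq S] [Nonempty S]
    (Q : Matrix S S ℝ) (ν : S → ℝ) (γ : S)
    (hQ : ∀ α β, 0 ≤ Q α β)
    (hrow : ∀ α, ∑ β, Q α β = 1)
    (hirr : ∀ α β, ∃ n : ℕ, 0 < (Q ^ n) α β)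
    (hν : ∀ α, 0 < ν α) (hνsum : ∑ α, ν α = 1)
    (hinv : ∀ β, ∑ α, ν α * Q α β = ν β) :
    ∃ R : Matrix S S ℝ,
      (∀ α β, HasSum
        (fun k : ℕ => (((Matrix.of fun a b => if b = γ then 0 else Q a b)) ^ k) α β)
        (R α β)) ∧
      ∀ α, R γ α = ν α / ν γ := by
  classical
  set M : Matrix S S ℝ := Matrix.of fun a b => if b = γ then 0 else Q a b with hMdef
  have hMapp : ∀ a b, M a b = if b = γ then 0 else Q a b := fun a b => rfl
  have hM0 : ∀ α β, 0 ≤ M α β := by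
    intro α β; rw [hMapp]; split
    · exact le_refl _
    · exact hQ α β
  have hMle : ∀ α β, M α β ≤ Q α β := by
    intro α β; rw [hMapp]; split
    · exact hQ α β
    · exact le_refl _
  have hMγ : ∀ α, M α γ = 0 := by intro α; rw [hMapp]; simp
  have hMrow : ∀ α, ∑ β, M α β ≤ 1 := by
    intro α
    calc ∑ β, M α β ≤ ∑ β, Q α β := Finset.sum_le_sum fun β _ => hMle α β
      _ = 1 := hrow α
  -- powers of M: nonneg entries, row sums ≤ 1
  have hpow0 : ∀ k α β, 0 ≤ (M ^ k) α β := by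
    intro k
    induction k with
    | zero => intro α β; simp [Matrix.one_apply]; split <;> norm_num
    | succ k ih =>
      intro α β
      rw [pow_succ, Matrix.mul_apply]
      exact Finset.sum_nonneg fun c _ => mul_nonneg (ih α c) (hM0 c β)
  have hprow : ∀ k α, ∑ β, (M ^ k) α β ≤ 1 := by
    intro k
    induction k with
    | zero => intro α; simp [Matrix.one_apply]
    | succ k ih =>
      intro α
      rw [show ∑ β, (M ^ (k+1)) α β = ∑ β, ∑ c, (M ^ k) α c * M c β by
        simp [pow_succ, Matrix.mul_apply]]
      rw [Finset.sum_comm]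
      calc ∑ c, ∑ β, (M ^ k) α c * M c β
          = ∑ c, (M ^ k) α c * ∑ β, M c β := by simp [Finset.mul_sum]
        _ ≤ ∑ c, (M ^ k) α c * 1 := Finset.sum_le_sum fun c _ =>
            mul_le_mul_of_nonneg_left (hMrow c) (hpow0 k α c)
        _ = ∑ c, (M ^ k) α c := by simp
        _ ≤ 1 := ih α
  have hple1 : ∀ k α β, (M ^ k) α β ≤ 1 := by
    intro k α β
    calc (M ^ k) α β ≤ ∑ b, (M ^ k) α b :=
          Finset.single_le_sum (fun b _ => hpow0 k α b) (Finset.mem_univ β)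
      _ ≤ 1 := hprow k α
  -- the measure iterates
  set a : ℕ → S → ℝ := fun k β => ∑ α, ν α * (M ^ k) α β with hadef
  have ha0 : ∀ β, a 0 β = ν β := by
    intro β; simp [hadef, Matrix.one_apply, Finset.sum_ite_eq]
  have ha_nonneg : ∀ k β, 0 ≤ a k β :=
    fun k β => Finset.sum_nonneg fun α _ => mul_nonneg (hν α).le (hpow0 k α β)
  have ha_succ : ∀ k β, a (k+1) β = ∑ α, a k α * M α β := by
    intro k β
    simp only [hadef, pow_succ, Matrix.mul_apply, Finset.mul_sum, Finset.sum_mul]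
    rw [Finset.sum_comm]
    exact Finset.sum_congr rfl fun α _ => Finset.sum_congr rfl fun c _ => by ring
  have ha_succ' : ∀ k β, a (k+1) β = ∑ α, (∑ c, ν c * M c α) * (M ^ k) α β := by
    intro k β
    simp only [hadef, pow_succ', Matrix.mul_apply, Finset.mul_sum, Finset.sum_mul]
    rw [Finset.sum_comm]
    exact Finset.sum_congr rfl fun α _ => Finset.sum_congr rfl fun c _ => by ring
  have hνM_le : ∀ α, ∑ c, ν c * M c α ≤ ν α := by
    intro α
    calc ∑ c, ν c * M c α ≤ ∑ c, ν c * Q c α :=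
          Finset.sum_le_sum fun c _ => mul_le_mul_of_nonneg_left (hMle c α) (hν c).le
      _ = ν α := hinv α
  have ha_anti : ∀ β, Antitone fun k => a k β := by
    intro β
    apply antitone_nat_of_succ_le
    intro k
    rw [ha_succ']
    calc ∑ α, (∑ c, ν c * M c α) * (M ^ k) α β
        ≤ ∑ α, ν α * (M ^ k) α β := Finset.sum_le_sum fun α _ =>
          mul_le_mul_of_nonneg_right (hνM_le α) (hpow0 k α β)
      _ = a k β := rfl
  -- the limit w of a k
  set w : S → ℝ := fun β => ⨅ k, a k β with hwdef
  have hbdd : ∀ β, BddBelow (Set.range fun k => a k β) :=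
    fun β => ⟨0, by rintro x ⟨k, rfl⟩; exact ha_nonneg k β⟩
  have htend : ∀ β, Tendsto (fun k => a k β) atTop (𝓝 (w β)) :=
    fun β => tendsto_atTop_ciInf (ha_anti β) (hbdd β)
  have hw_nonneg : ∀ β, 0 ≤ w β := by
    intro β
    exact le_ciInf fun k => ha_nonneg k β
  have haγ : ∀ k, a (k+1) γ = 0 := by
    intro k; rw [ha_succ]; simp [hMγ]
  have hwγ : w γ = 0 := by
    have h1 : Tendsto (fun k => a (k+1) γ) atTop (𝓝 (w γ)) :=
      (htend γ).comp (tendsto_add_atTop_nat 1)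
    have h2 : Tendsto (fun k : ℕ => (0 : ℝ)) atTop (𝓝 (0 : ℝ)) := tendsto_const_nhds
    exact tendsto_nhds_unique (by simpa [haγ] using h1) h2
  have hwM : ∀ β, ∑ α, w α * M α β = w β := by
    intro β
    have h1 : Tendsto (fun k => ∑ α, a k α * M α β) atTop (𝓝 (∑ α, w α * M α β)) :=
      tendsto_finset_sum _ fun α _ => (htend α).mul_const _
    have h2 : Tendsto (fun k => a (k+1) β) atTop (𝓝 (w β)) :=
      (htend β).comp (tendsto_add_atTop_nat 1)
    have h2' : Tendsto (fun k => ∑ α, a k α * M α β) atTop (𝓝 (w β)) :=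
      h2.congr fun k => ha_succ k β
    exact tendsto_nhds_unique h1 h2'
  have hwQ : ∀ β, ∑ α, w α * Q α β = w β := by
    have hne : ∀ β, β ≠ γ → ∑ α, w α * Q α β = w β := by
      intro β hβ
      rw [← hwM β]
      exact Finset.sum_congr rfl fun α _ => by rw [hMapp]; simp [hβ]
    intro β
    by_cases hβ : β = γ
    · rw [hβ]
      have htot : ∑ β, ∑ α, w α * Q α β = ∑ α, w α := by
        rw [Finset.sum_comm]
        simp [← Finset.mul_sum, hrow]
      have hsplit : ∑ β, ∑ α, w α * Q α β
          = (∑ α, w α * Q α γ) + ∑ β ∈ Finset.univ.erase γ, ∑ α, w α * Q α β :=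
        (Finset.add_sum_erase _ _ (Finset.mem_univ γ)).symm
      have herase : ∑ β ∈ Finset.univ.erase γ, ∑ α, w α * Q α β
          = ∑ β ∈ Finset.univ.erase γ, w β :=
        Finset.sum_congr rfl fun β hβ => hne β (Finset.ne_of_mem_erase hβ)
      have hsplit2 : ∑ α, w α = w γ + ∑ β ∈ Finset.univ.erase γ, w β :=
        (Finset.add_sum_erase _ _ (Finset.mem_univ γ)).symm
      have := htot
      rw [hsplit, herase, hsplit2] at this
      linarith
    · exact hne β hβ
  have hQpow0 : ∀ n α β, 0 ≤ (Q ^ n) α β := by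
    intro n
    induction n with
    | zero => intro α β; simp [Matrix.one_apply]; split <;> norm_num
    | succ n ih =>
      intro α β
      rw [pow_succ, Matrix.mul_apply]
      exact Finset.sum_nonneg fun c _ => mul_nonneg (ih α c) (hQ c β)
  have hwQpow : ∀ n β, ∑ α, w α * (Q ^ n) α β = w β := by
    intro n
    induction n with
    | zero => intro β; simp [Matrix.one_apply, Finset.sum_ite_eq]
    | succ n ih =>
      intro β
      calc ∑ α, w α * (Q ^ (n+1)) α β
          = ∑ α, w α * ∑ c, (Q ^ n) α c * Q c β := by
            simp [pow_succ, Matrix.mul_apply]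
        _ = ∑ c, (∑ α, w α * (Q ^ n) α c) * Q c β := by
            simp only [Finset.mul_sum, Finset.sum_mul]
            rw [Finset.sum_comm]
            exact Finset.sum_congr rfl fun α _ => Finset.sum_congr rfl fun c _ => by ring
        _ = ∑ c, w c * Q c β := by
            exact Finset.sum_congr rfl fun c _ => by rw [ih c]
        _ = w β := hwQ β
  have hw0 : ∀ α, w α = 0 := by
    intro α
    obtain ⟨n, hn⟩ := hirr α γ
    have h0 : ∑ c, w c * (Q ^ n) c γ = 0 := by rw [hwQpow n γ, hwγ]
    have hterm : w α * (Q ^ n) α γ = 0 := by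
      have hle : w α * (Q ^ n) α γ ≤ ∑ c, w c * (Q ^ n) c γ :=
        Finset.single_le_sum (fun c _ => mul_nonneg (hw_nonneg c) (hQpow0 n c γ))
          (Finset.mem_univ α)
      have hge : 0 ≤ w α * (Q ^ n) α γ := mul_nonneg (hw_nonneg α) (hQpow0 n α γ)
      linarith [hle, hge, h0.le, h0.ge]
    rcases mul_eq_zero.mp hterm with h | h
    · exact h
    · exact absurd h hn.ne'
  -- hence a k β → 0 for all β
  have htend0 : ∀ β, Tendsto (fun k => a k β) atTop (𝓝 0) := by
    intro β; have := htend β; rwa [show w β = 0 from hw0 β] at this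
  -- find n with small row sums of M^n
  set m : ℝ := Finset.univ.inf' Finset.univ_nonempty ν with hmdef
  have hm_pos : 0 < m := by
    rw [hmdef, Finset.lt_inf'_iff]
    exact fun α _ => hν α
  have hm_le : ∀ α, m ≤ ν α := fun α =>
    Finset.inf'_le _ (Finset.mem_univ α)
  have httend : Tendsto (fun k => ∑ β, a k β) atTop (𝓝 0) := by
    have := tendsto_finset_sum Finset.univ fun β (_ : β ∈ Finset.univ) => htend0 β
    simpa using this
  obtain ⟨n, hn⟩ : ∃ n : ℕ, 1 ≤ n ∧ ∑ β, a n β < m / 2 := by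
    have hev : ∀ᶠ k in atTop, ∑ β, a k β < m / 2 :=
      httend.eventually (eventually_lt_nhds (by linarith))
    obtain ⟨N, hN⟩ := hev.exists_forall_of_atTop
    exact ⟨N + 1, Nat.le_add_left 1 N, hN (N+1) (Nat.le_succ N)⟩
  obtain ⟨hn1, hnsmall⟩ := hn
  have hMnrow : ∀ α, ∑ β, (M ^ n) α β ≤ 1/2 := by
    intro α
    have hentry : ∀ β, (M ^ n) α β ≤ a n β / ν α := by
      intro β
      rw [le_div_iff₀ (hν α)]
      calc (M ^ n) α β * ν α = ν α * (M ^ n) α β := by ring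
        _ ≤ ∑ c, ν c * (M ^ n) c β :=
          Finset.single_le_sum (fun c _ => mul_nonneg (hν c).le (hpow0 n c β))
            (Finset.mem_univ α)
        _ = a n β := rfl
    calc ∑ β, (M ^ n) α β ≤ ∑ β, a n β / ν α := Finset.sum_le_sum fun β _ => hentry β
      _ = (∑ β, a n β) / ν α := by rw [Finset.sum_div]
      _ ≤ (∑ β, a n β) / m := by
          apply div_le_div_of_nonneg_left ?_ hm_pos (hm_le α)
          exact Finset.sum_nonneg fun β _ => ha_nonneg n β
      _ ≤ (m/2) / m := by gcongr
      _ = 1/2 := by field_simp [mul_comm]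
  -- geometric decay of entries of M^k
  have key : ∀ k, ∀ α β : S, (M ^ k) α β ≤ (1/2 : ℝ) ^ (k / n) := by
    intro k
    induction k using Nat.strong_induction_on with
    | _ k ih =>
      intro α β
      rcases lt_or_ge k n with hk | hk
      · rw [Nat.div_eq_of_lt hk, pow_zero]
        exact hple1 k α β
      · have hsplit : M ^ k = M ^ n * M ^ (k - n) := by
          rw [← pow_add, Nat.add_sub_cancel' hk]
        have hkn : k - n < k := by omega
        have hdiv : (k - n) / n + 1 = k / n := by
          rw [← Nat.add_div_right _ (by omega : 0 < n), Nat.sub_add_cancel hk]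
        rw [hsplit, Matrix.mul_apply]
        calc ∑ c, (M ^ n) α c * (M ^ (k - n)) c β
            ≤ ∑ c, (M ^ n) α c * (1/2 : ℝ) ^ ((k - n) / n) :=
              Finset.sum_le_sum fun c _ =>
                mul_le_mul_of_nonneg_left (ih (k - n) hkn c β) (hpow0 n α c)
          _ = (∑ c, (M ^ n) α c) * (1/2 : ℝ) ^ ((k - n) / n) := by
              rw [Finset.sum_mul]
          _ ≤ (1/2) * (1/2 : ℝ) ^ ((k - n) / n) :=
              mul_le_mul_of_nonneg_right (hMnrow α) (by positivity)
          _ = (1/2 : ℝ) ^ ((k - n) / n + 1) := by rw [pow_succ]; ring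
          _ = (1/2 : ℝ) ^ (k / n) := by rw [hdiv]
  -- partial sums are bounded
  have hblock : ∀ N : ℕ, ∑ k ∈ Finset.range (n * N), ((1/2:ℝ)) ^ (k / n)
      = (n : ℝ) * ∑ q ∈ Finset.range N, (1/2:ℝ) ^ q := by
    intro N
    induction N with
    | zero => simp
    | succ N ih =>
      rw [Nat.mul_succ, Finset.sum_range_add, ih, Finset.sum_range_succ]
      have : ∀ i ∈ Finset.range n, ((1/2:ℝ)) ^ ((n * N + i) / n) = (1/2:ℝ) ^ N := by
        intro i hi
        congr 1
        rw [Nat.mul_add_div (by omega : 0 < n)]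
        rw [Nat.div_eq_of_lt (Finset.mem_range.mp hi), add_zero]
      rw [Finset.sum_congr rfl this, Finset.sum_const, Finset.card_range]
      push_cast
      ring
  have hpartial : ∀ (α β : S) (N : ℕ), ∑ k ∈ Finset.range N, (M ^ k) α β ≤ 2 * (n : ℝ) := by
    intro α β N
    calc ∑ k ∈ Finset.range N, (M ^ k) α β
        ≤ ∑ k ∈ Finset.range N, (1/2:ℝ) ^ (k / n) :=
          Finset.sum_le_sum fun k _ => key k α β
      _ ≤ ∑ k ∈ Finset.range (n * N), (1/2:ℝ) ^ (k / n) :=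
          Finset.sum_le_sum_of_subset_of_nonneg
            (Finset.range_subset_range.mpr (by nlinarith [hn1])) (fun k _ _ => by positivity)
      _ = (n : ℝ) * ∑ q ∈ Finset.range N, (1/2:ℝ) ^ q := hblock N
      _ ≤ (n : ℝ) * 2 :=
          mul_le_mul_of_nonneg_left (sum_geometric_two_le N) (by positivity)
      _ = 2 * (n : ℝ) := by ring
  have hsummable : ∀ α β : S, Summable fun k => (M ^ k) α β := fun α β =>
    summable_of_sum_range_le (fun k => hpow0 k α β) (hpartial α β)
  set R : Matrix S S ℝ := Matrix.of fun α β => ∑' k, (M ^ k) α β with hRdef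
  have hHas : ∀ α β : S, HasSum (fun k => (M ^ k) α β) (R α β) := fun α β =>
    (hsummable α β).hasSum
  refine ⟨R, hHas, ?_⟩
  intro β
  -- identification of row γ
  have h1 : HasSum (fun k => a k β) (∑ α, ν α * R α β) :=
    hasSum_sum fun α _ => (hHas α β).mul_left (ν α)
  have h2 : HasSum (fun k => a (k+1) β) (∑ α, (∑ c, ν c * M c α) * R α β) := by
    have h2' : HasSum (fun k => ∑ α, (∑ c, ν c * M c α) * (M ^ k) α β)
        (∑ α, (∑ c, ν c * M c α) * R α β) :=
      hasSum_sum fun α _ => (hHas α β).mul_left _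
    have heq : (fun k => ∑ α, (∑ c, ν c * M c α) * (M ^ k) α β)
        = fun k => a (k+1) β := funext fun k => (ha_succ' k β).symm
    rw [← heq]
    exact h2'
  have h3 : HasSum (fun k => a (k+1) β) ((∑ α, ν α * R α β) - a 0 β) := by
    refine (hasSum_nat_add_iff (f := fun k => a k β)
      (g := (∑ α, ν α * R α β) - a 0 β) 1).mpr ?_
    have : (∑ α, ν α * R α β) - a 0 β + ∑ i ∈ Finset.range 1, a i β
        = ∑ α, ν α * R α β := by
      rw [Finset.sum_range_one]; ring
    rw [this]
    exact h1
  have hT : ∑ α, (∑ c, ν c * M c α) * R α β = (∑ α, ν α * R α β) - a 0 β :=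
    h2.unique h3
  have hcoef : ∀ α, ν α - (∑ c, ν c * M c α) = if α = γ then ν γ else 0 := by
    intro α
    by_cases h : α = γ
    · rw [h]; simp [hMγ]
    · have hMQ : ∑ c, ν c * M c α = ν α := by
        rw [← hinv α]
        exact Finset.sum_congr rfl fun c _ => by rw [hMapp]; simp [h]
      simp [h, hMQ]
  have hsum_eq : ∑ α, (ν α - ∑ c, ν c * M c α) * R α β = ν γ * R γ β := by
    have heach : ∀ α, (ν α - ∑ c, ν c * M c α) * R α β
        = if α = γ then ν γ * R γ β else 0 := by
      intro α
      rw [hcoef α]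
      by_cases h : α = γ
      · rw [h]; simp
      · simp [h]
    rw [Finset.sum_congr rfl fun α _ => heach α]
    simp
  have hexpand : ∑ α, (ν α - ∑ c, ν c * M c α) * R α β
      = (∑ α, ν α * R α β) - ∑ α, (∑ c, ν c * M c α) * R α β := by
    rw [← Finset.sum_sub_distrib]
    exact Finset.sum_congr rfl fun α _ => by ring
  have hfinal : ν γ * R γ β = ν β := by
    rw [← hsum_eq, hexpand, hT, ha0]
    ring
  rw [eq_div_iff (hν γ).ne']
  linarith [hfinal]
end

section
/- With the same setup, [(1 − Q^{(γ)})^{-1} · Q]_{α,γ} = 1 for every state α. -/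
open Finset

/-- For an irreducible stochastic matrix `Q` on a finite state space, with `Q^{(γ)}`
the matrix `Q` with the `γ` column set to zero, the matrix
`(1 - Q^{(γ)})^{-1} := Σ_k (Q^{(γ)})^k` satisfies `[(1 - Q^{(γ)})^{-1} · Q]_{α,γ} = 1`
for every state `α`. -/
theorem geometric_series_times_Q
    {S : Type*} [Fintype S] [DecidableEq S] [Nonempty S]
    (Q : Matrix S S ℝ) (γ : S)
    (hQ : ∀ α β, 0 ≤ Q α β)
    (hrow : ∀ α, ∑ β, Q α β = 1)
    (hirr : ∀ α β, ∃ n : ℕ, 0 < (Q ^ n) α β) :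
    ∃ R : Matrix S S ℝ,
      (∀ α β, HasSum
        (fun k : ℕ => (((Matrix.of fun a b => if b = γ then 0 else Q a b)) ^ k) α β)
        (R α β)) ∧
      ∀ α, (R * Q) α γ = 1 := by
  set P : Matrix S S ℝ := Matrix.of fun a b => if b = γ then 0 else Q a b with hP
  have hP0 : ∀ a b, 0 ≤ P a b := by
    intro a b; simp only [hP, Matrix.of_apply]
    split
    · exact le_refl 0
    · exact hQ a b
  -- nonnegativity of powers of P
  have hPk0 : ∀ k a b, 0 ≤ (P ^ k) a b := by
    intro k
    induction k with
    | zero =>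
      intro a b
      simp only [pow_zero, Matrix.one_apply]
      split <;> norm_num
    | succ k ih =>
      intro a b
      rw [pow_succ, Matrix.mul_apply]
      exact Finset.sum_nonneg fun c _ => mul_nonneg (ih a c) (hP0 c b)
  -- nonnegativity and row sums of powers of Q
  have hQk : ∀ n, (∀ a b, 0 ≤ (Q ^ n) a b) ∧ (∀ a, ∑ b, (Q ^ n) a b = 1) := by
    intro n
    induction n with
    | zero =>
      refine ⟨fun a b => ?_, fun a => ?_⟩
      · simp only [pow_zero, Matrix.one_apply]; split <;> norm_num
      · simp [Matrix.one_apply]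
    | succ n ih =>
      refine ⟨fun a b => ?_, fun a => ?_⟩
      · rw [pow_succ, Matrix.mul_apply]
        exact Finset.sum_nonneg fun c _ => mul_nonneg (ih.1 a c) (hQ c b)
      · simp only [pow_succ, Matrix.mul_apply]
        rw [Finset.sum_comm]
        calc ∑ c, ∑ b, (Q ^ n) a c * Q c b
            = ∑ c, (Q ^ n) a c * ∑ b, Q c b := by
              simp [Finset.mul_sum]
          _ = ∑ c, (Q ^ n) a c := by simp [hrow]
          _ = 1 := ih.2 a
  -- replacing a `P`-sum by a `Q`-sum
  have hPsum : ∀ a (g : S → ℝ), ∑ c, P a c * g c = (∑ c, Q a c * g c) - Q a γ * g γ := by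
    intro a g
    rw [← Finset.sum_erase_eq_sub (Finset.mem_univ γ)]
    rw [← Finset.sum_erase (Finset.univ) (f := fun c => P a c * g c) (a := γ)
      (by simp [hP])]
    refine Finset.sum_congr rfl fun c hc => ?_
    have : c ≠ γ := Finset.ne_of_mem_erase hc
    simp [hP, this]
  -- row sums of powers of P
  set f : ℕ → S → ℝ := fun k a => ∑ b, (P ^ k) a b with hf
  have hf0' : ∀ k a, 0 ≤ f k a := fun k a =>
    Finset.sum_nonneg fun b _ => hPk0 k a b
  have hf0 : ∀ a, f 0 a = 1 := by intro a; simp [hf, Matrix.one_apply]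
  have hfadd : ∀ m n a, f (m + n) a = ∑ c, (P ^ m) a c * f n c := by
    intro m n a
    simp only [hf, pow_add, Matrix.mul_apply]
    rw [Finset.sum_comm]
    simp [Finset.mul_sum]
  have hf1 : ∀ a, f 1 a = 1 - Q a γ := by
    intro a
    have h := hPsum a (fun _ => 1)
    simp only [mul_one, hrow a] at h
    simpa [hf] using h
  have hf1le : ∀ a, f 1 a ≤ 1 := by
    intro a; rw [hf1]; linarith [hQ a γ]
  have hstep : ∀ k a, f (k + 1) a ≤ f k a := by
    intro k a
    rw [hfadd k 1 a]
    calc ∑ c, (P ^ k) a c * f 1 c ≤ ∑ c, (P ^ k) a c * 1 := by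
          refine Finset.sum_le_sum fun c _ => ?_
          exact mul_le_mul_of_nonneg_left (hf1le c) (hPk0 k a c)
      _ = f k a := by simp [hf]
  have hanti : ∀ m n a, m ≤ n → f n a ≤ f m a := by
    intro m n a h
    induction n with
    | zero => simp_all
    | succ n ih =>
      rcases Nat.lt_or_ge m (n+1) with h' | h'
      · exact le_trans (hstep n a) (ih (Nat.lt_succ_iff.1 h'))
      · have : m = n + 1 := le_antisymm h h'
        subst this; exact le_refl _
  have hfle1 : ∀ k a, f k a ≤ 1 := by
    intro k a
    calc f k a ≤ f 0 a := hanti 0 k a (Nat.zero_le k)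
      _ = 1 := hf0 a
  -- hitting bound
  have hhit : ∀ n a, f (n + 1) a ≤ 1 - (Q ^ (n + 1)) a γ := by
    intro n
    induction n with
    | zero => intro a; rw [hf1, pow_one]
    | succ n ih =>
      intro a
      have h1 : f (n + 2) a ≤ ∑ c, P a c * (1 - (Q ^ (n + 1)) c γ) := by
        have := hfadd 1 (n + 1) a
        rw [show (1 : ℕ) + (n + 1) = n + 2 by ring, pow_one] at this
        rw [this]
        exact Finset.sum_le_sum fun c _ =>
          mul_le_mul_of_nonneg_left (ih c) (hP0 a c)
      have h2 : ∑ c, P a c * (1 - (Q ^ (n + 1)) c γ)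
          = f 1 a - ∑ c, P a c * (Q ^ (n + 1)) c γ := by
        simp only [mul_sub, Finset.sum_sub_distrib, mul_one]
        congr 1
        simp [hf, pow_one]
      have h3 : ∑ c, P a c * (Q ^ (n + 1)) c γ
          = (∑ c, Q a c * (Q ^ (n + 1)) c γ) - Q a γ * (Q ^ (n + 1)) γ γ :=
        hPsum a _
      have h4 : (Q ^ (n + 2)) a γ = ∑ c, Q a c * (Q ^ (n + 1)) c γ := by
        rw [show n + 2 = 1 + (n + 1) by ring, pow_add, pow_one, Matrix.mul_apply]
      have h5 : (Q ^ (n + 1)) γ γ ≤ 1 := by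
        calc (Q ^ (n + 1)) γ γ ≤ ∑ b, (Q ^ (n + 1)) γ b :=
              Finset.single_le_sum (fun b _ => (hQk (n+1)).1 γ b) (Finset.mem_univ γ)
          _ = 1 := (hQk (n+1)).2 γ
      have h6 : Q a γ * (Q ^ (n + 1)) γ γ ≤ Q a γ :=
        le_trans (mul_le_mul_of_nonneg_left h5 (hQ a γ)) (by simp)
      rw [hf1] at h2
      calc f (n + 2) a ≤ 1 - Q a γ - ((∑ c, Q a c * (Q ^ (n + 1)) c γ)
            - Q a γ * (Q ^ (n + 1)) γ γ) := by rw [← h3, ← h2]; exact h1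
        _ ≤ 1 - (Q ^ (n + 2)) a γ := by rw [h4]; linarith
  -- for every state there is a time with positive hitting probability
  have hpos : ∀ a, ∃ n, 0 < (Q ^ (n + 1)) a γ := by
    intro a
    obtain ⟨n, hn⟩ := hirr a γ
    match n, hn with
    | n + 1, hn => exact ⟨n, hn⟩
    | 0, hn =>
      have haγ : a = γ := by
        by_contra h
        simp [Matrix.one_apply, h] at hn
      rw [haγ]
      -- find β with Q γ β > 0
      have : ∃ β, 0 < Q γ β := by
        by_contra h
        push_neg at h
        have : ∑ β, Q γ β = 0 :=
          Finset.sum_eq_zero fun β _ => le_antisymm (h β) (hQ γ β)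
        rw [hrow γ] at this; norm_num at this
      obtain ⟨β, hβ⟩ := this
      obtain ⟨m, hm⟩ := hirr β γ
      refine ⟨m, ?_⟩
      have h1 : (Q ^ (m + 1)) γ γ = ∑ c, Q γ c * (Q ^ m) c γ := by
        rw [show m + 1 = 1 + m by ring, pow_add, pow_one, Matrix.mul_apply]
      rw [h1]
      calc (0:ℝ) < Q γ β * (Q ^ m) β γ := mul_pos hβ hm
        _ ≤ ∑ c, Q γ c * (Q ^ m) c γ :=
          Finset.single_le_sum
            (fun c _ => mul_nonneg (hQ γ c) ((hQk m).1 c γ)) (Finset.mem_univ β)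
  -- choose uniform N and c < 1
  have hlt : ∀ a, ∃ n, f n a < 1 := by
    intro a
    obtain ⟨n, hn⟩ := hpos a
    exact ⟨n + 1, lt_of_le_of_lt (hhit n a) (by linarith)⟩
  set g : S → ℕ := fun a => (hlt a).choose with hg
  have hgspec : ∀ a, f (g a) a < 1 := fun a => (hlt a).choose_spec
  set N : ℕ := Finset.univ.sup g with hNdef
  have hgN : ∀ a, g a ≤ N := fun a => Finset.le_sup (Finset.mem_univ a)
  have hN : ∀ a, f N a < 1 := fun a =>
    lt_of_le_of_lt (hanti (g a) N a (hgN a)) (hgspec a)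
  have hN1 : 1 ≤ N := by
    obtain ⟨a⟩ := ‹Nonempty S›
    have : g a ≠ 0 := by
      intro h
      have := hgspec a
      rw [h, hf0 a] at this
      exact lt_irrefl 1 this
    exact le_trans (Nat.one_le_iff_ne_zero.2 this) (hgN a)
  have huniv : (Finset.univ : Finset S).Nonempty := Finset.univ_nonempty
  set c : ℝ := Finset.univ.sup' huniv (fun a => f N a) with hcdef
  have hcf : ∀ a, f N a ≤ c := fun a => Finset.le_sup' _ (Finset.mem_univ a)
  have hc1 : c < 1 := (Finset.sup'_lt_iff huniv).2 fun a _ => hN a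
  have hc0 : 0 ≤ c := by
    obtain ⟨a⟩ := ‹Nonempty S›
    exact le_trans (hf0' N a) (hcf a)
  -- geometric decay along multiples of N
  have hgeom : ∀ j a, f (j * N) a ≤ c ^ j := by
    intro j
    induction j with
    | zero => intro a; simp [hf0 a]
    | succ j ih =>
      intro a
      have h1 : f ((j + 1) * N) a = ∑ d, (P ^ (j * N)) a d * f N d := by
        rw [show (j + 1) * N = j * N + N by ring]; exact hfadd _ _ a
      calc f ((j + 1) * N) a ≤ ∑ d, (P ^ (j * N)) a d * c := by
            rw [h1]
            exact Finset.sum_le_sum fun d _ =>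
              mul_le_mul_of_nonneg_left (hcf d) (hPk0 _ a d)
        _ = f (j * N) a * c := by rw [← Finset.sum_mul]
        _ ≤ c ^ j * c := mul_le_mul_of_nonneg_right (ih a) hc0
        _ = c ^ (j + 1) := by ring
  -- bound on partial sums of row sums
  have hblock : ∀ m a, ∑ k ∈ Finset.range (m * N), f k a ≤ (∑ j ∈ Finset.range m, c ^ j) * N := by
    intro m a
    induction m with
    | zero => simp
    | succ m ih =>
      rw [show (m + 1) * N = m * N + N by ring, Finset.sum_range_add,
        Finset.sum_range_succ, add_mul]
      have h1 : ∑ i ∈ Finset.range N, f (m * N + i) a ≤ c ^ m * N := by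
        calc ∑ i ∈ Finset.range N, f (m * N + i) a
            ≤ ∑ i ∈ Finset.range N, f (m * N) a :=
              Finset.sum_le_sum fun i _ => hanti _ _ a (Nat.le_add_right _ i)
          _ = N * f (m * N) a := by simp [mul_comm]
          _ ≤ N * c ^ m := mul_le_mul_of_nonneg_left (hgeom m a) (Nat.cast_nonneg N)
          _ = c ^ m * N := mul_comm _ _
      linarith [ih]
  have hgeo_sum : ∀ m : ℕ, ∑ j ∈ Finset.range m, c ^ j ≤ (1 - c)⁻¹ := by
    intro m
    exact sum_le_hasSum _ (fun i _ => pow_nonneg hc0 i)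
      (hasSum_geometric_of_lt_one hc0 hc1)
  have hbound : ∀ a n, ∑ k ∈ Finset.range n, f k a ≤ (1 - c)⁻¹ * N := by
    intro a n
    calc ∑ k ∈ Finset.range n, f k a ≤ ∑ k ∈ Finset.range (n * N), f k a := by
          refine Finset.sum_le_sum_of_subset_of_nonneg ?_ (fun k _ _ => hf0' k a)
          exact Finset.range_subset_range.2 (Nat.le_mul_of_pos_right n (by omega))
      _ ≤ (∑ j ∈ Finset.range n, c ^ j) * N := hblock n a
      _ ≤ (1 - c)⁻¹ * N := by
          exact mul_le_mul_of_nonneg_right (hgeo_sum n) (Nat.cast_nonneg N)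
  -- summability of entries
  have hsummable : ∀ α β, Summable (fun k : ℕ => (P ^ k) α β) := by
    intro α β
    refine summable_of_sum_range_le (c := (1 - c)⁻¹ * N) (fun k => hPk0 k α β) ?_
    intro n
    calc ∑ k ∈ Finset.range n, (P ^ k) α β ≤ ∑ k ∈ Finset.range n, f k α :=
          Finset.sum_le_sum fun k _ =>
            Finset.single_le_sum (fun b _ => hPk0 k α b) (Finset.mem_univ β)
      _ ≤ (1 - c)⁻¹ * N := hbound α n
  set R : Matrix S S ℝ := Matrix.of fun α β => ∑' k : ℕ, (P ^ k) α β with hRdef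
  have hR : ∀ α β, HasSum (fun k : ℕ => (P ^ k) α β) (R α β) := fun α β =>
    (hsummable α β).hasSum
  refine ⟨R, hR, ?_⟩
  intro α
  -- key identity: (R * P) α d = R α d - (1 : Matrix S S ℝ) α d
  have hRP : ∀ d, (R * P) α d = R α d - (1 : Matrix S S ℝ) α d := by
    intro d
    have h1 : HasSum (fun k : ℕ => (P ^ (k + 1)) α d) ((R * P) α d) := by
      have h := hasSum_sum (s := Finset.univ)
        (f := fun β k => (P ^ k) α β * P β d)
        (a := fun β => R α β * P β d)
        (fun β _ => (hR α β).mul_right (P β d))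
      have he : (fun k : ℕ => ∑ β, (P ^ k) α β * P β d)
          = fun k : ℕ => (P ^ (k + 1)) α d := by
        funext k; rw [pow_succ, Matrix.mul_apply]
      rw [he] at h
      rw [Matrix.mul_apply]
      exact h
    have h2 : HasSum (fun k : ℕ => (P ^ (k + 1)) α d)
        (R α d - (1 : Matrix S S ℝ) α d) := by
      have := (hasSum_nat_add_iff' (f := fun k : ℕ => (P ^ k) α d) 1).2 (hR α d)
      simpa using this
    exact h1.unique h2
  have hQβγ : ∀ β, Q β γ = 1 - f 1 β := by
    intro β; rw [hf1 β]; ring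
  have hsum1 : ∑ d, (1 : Matrix S S ℝ) α d = 1 := by simp [Matrix.one_apply]
  calc (R * Q) α γ = ∑ β, R α β * Q β γ := Matrix.mul_apply
    _ = ∑ β, R α β * (1 - f 1 β) := by
        refine Finset.sum_congr rfl fun β _ => by rw [hQβγ β]
    _ = (∑ β, R α β) - ∑ β, R α β * f 1 β := by
        simp [mul_sub, Finset.sum_sub_distrib]
    _ = (∑ β, R α β) - ∑ d, (R * P) α d := by
        congr 1
        simp only [hf, pow_one, Matrix.mul_apply, Finset.mul_sum]
        rw [Finset.sum_comm]
    _ = (∑ β, R α β) - ((∑ d, R α d) - 1) := by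
        congr 1
        rw [Finset.sum_congr rfl fun d _ => hRP d, Finset.sum_sub_distrib, hsum1]
    _ = 1 := by ring
end

section
/- Let C(t) be the S×S matrix C_{α,β}(t) := exp(t·w_α 1_{β−α=[1]}) q(β−α) indexed by S = ℤ/TZ, where Σ_α w_α = 0 and q : S → (0,∞) with Σ_γ q(γ) = 1. Then the Perron–Frobenius eigenvalue η(t) := Z(C(t)) satisfies η(t) ≥ 1 for all t ∈ ℝ. -/
open Matrix

/-- For `C(t)_{α,β} = exp(t w_α 1_{β-α=1}) q(β-α)` on `S = ℤ/Tℤ`, with `Σ_α w_α = 0`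
and `q` a strictly positive probability vector, the Perron–Frobenius eigenvalue
`η t` (characterized by a strictly positive eigenvector) satisfies `η t ≥ 1` for all
real `t`. -/
theorem copolymer_eta_ge_one
    {T : ℕ} [NeZero T]
    (w q : ZMod T → ℝ) (η : ℝ → ℝ)
    (hw : ∑ α, w α = 0)
    (hq : ∀ γ, 0 < q γ) (hqsum : ∑ γ, q γ = 1)
    (hη : ∀ t : ℝ, ∃ v : ZMod T → ℝ, (∀ i, 0 < v i) ∧
      (Matrix.of fun α β : ZMod T =>
        (if β - α = 1 then Real.exp (t * w α) else 1) * q (β - α)) *ᵥ v = η t • v) :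
    ∀ t : ℝ, 1 ≤ η t := by
  intro t
  obtain ⟨v, hv, heig⟩ := hη t
  -- the eigen-equation, entrywise
  have heq : ∀ α : ZMod T,
      ∑ β, (if β - α = 1 then Real.exp (t * w α) else 1) * q (β - α) * v β
        = η t * v α := by
    intro α
    have := congrFun heig α
    simpa [Matrix.mulVec, dotProduct, Pi.smul_apply, smul_eq_mul] using this
  -- positivity of η t
  have hηpos : 0 < η t := by
    have h0 := heq 0
    have hpos : 0 < ∑ β, (if β - (0 : ZMod T) = 1 then Real.exp (t * w 0) else 1)
        * q (β - 0) * v β := by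
      apply Finset.sum_pos
      · intro β _
        have := hq (β - 0)
        have := hv β
        positivity
      · exact Finset.univ_nonempty
    rw [h0] at hpos
    have h := hv 0
    nlinarith
  -- weight row sums equal 1
  have hrow : ∀ α : ZMod T, ∑ β, q (β - α) = 1 := by
    intro α
    have := Equiv.sum_comp (Equiv.subRight α) q
    simpa [Equiv.subRight] using this.trans hqsum
  have hcol : ∀ β : ZMod T, ∑ α, q (β - α) = 1 := by
    intro β
    have := Equiv.sum_comp (Equiv.subLeft β) q
    simpa [Equiv.subLeft] using this.trans hqsum
  -- Jensen's inequality for each α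
  have jensen : ∀ α : ZMod T,
      ∑ β, q (β - α) * Real.log ((if β - α = 1 then Real.exp (t * w α) else 1) * v β)
        ≤ Real.log (η t * v α) := by
    intro α
    have := (strictConcaveOn_log_Ioi.concaveOn).le_map_sum
      (t := Finset.univ)
      (w := fun β : ZMod T => q (β - α))
      (p := fun β : ZMod T => (if β - α = 1 then Real.exp (t * w α) else 1) * v β)
      (fun β _ => (hq _).le) (hrow α)
      (fun β _ => by
        have := hv β
        by_cases h : β - α = 1 <;> simp [h, Set.mem_Ioi] <;> positivity)
    simp only [smul_eq_mul] at this
    refine this.trans_eq ?_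
    congr 1
    rw [← heq α]
    congr 1; ext β; ring
  -- rewrite the log of the products
  have hlogz : ∀ α β : ZMod T,
      Real.log ((if β - α = 1 then Real.exp (t * w α) else 1) * v β)
        = (if β - α = 1 then t * w α else 0) + Real.log (v β) := by
    intro α β
    by_cases h : β - α = 1
    · rw [if_pos h, if_pos h, Real.log_mul (Real.exp_ne_zero _) (hv β).ne',
        Real.log_exp]
    · rw [if_neg h, if_neg h, one_mul, zero_add]
  -- sum Jensen over α
  have hsum : ∑ α, ∑ β, q (β - α) *
      ((if β - α = 1 then t * w α else 0) + Real.log (v β))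
        ≤ ∑ α, Real.log (η t * v α) := by
    apply Finset.sum_le_sum
    intro α _
    refine le_trans (le_of_eq ?_) (jensen α)
    apply Finset.sum_congr rfl
    intro β _
    rw [hlogz]
  -- compute the LHS
  have hLHS : ∑ α, ∑ β, q (β - α) *
      ((if β - α = 1 then t * w α else 0) + Real.log (v β))
        = ∑ β, Real.log (v β) := by
    have : ∀ α : ZMod T, ∑ β, q (β - α) *
        ((if β - α = 1 then t * w α else 0) + Real.log (v β))
          = q 1 * (t * w α) + ∑ β, q (β - α) * Real.log (v β) := by
      intro α
      rw [show (∑ β, q (β - α) * ((if β - α = 1 then t * w α else 0) + Real.log (v β)))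
          = (∑ β, (if β = 1 + α then q 1 * (t * w α) else 0))
            + ∑ β, q (β - α) * Real.log (v β) by
        rw [← Finset.sum_add_distrib]
        apply Finset.sum_congr rfl
        intro β _
        have hiff : β - α = 1 ↔ β = 1 + α := sub_eq_iff_eq_add
        by_cases h : β - α = 1
        · rw [if_pos h, if_pos (hiff.mp h), h]; ring
        · rw [if_neg h, if_neg (fun hh => h (hiff.mpr hh))]; ring]
      rw [Finset.sum_ite_eq' Finset.univ (1 + α) (fun _ => q 1 * (t * w α))]
      simp
    rw [Finset.sum_congr rfl (fun α _ => this α), Finset.sum_add_distrib]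
    rw [← Finset.mul_sum, ← Finset.mul_sum, hw, mul_zero, mul_zero, zero_add]
    rw [Finset.sum_comm]
    apply Finset.sum_congr rfl
    intro β _
    rw [← Finset.sum_mul, hcol, one_mul]
  -- compute the RHS
  have hRHS : ∑ α : ZMod T, Real.log (η t * v α)
      = T * Real.log (η t) + ∑ α, Real.log (v α) := by
    have : ∀ α : ZMod T, Real.log (η t * v α) = Real.log (η t) + Real.log (v α) :=
      fun α => Real.log_mul hηpos.ne' (hv α).ne'
    rw [Finset.sum_congr rfl (fun α _ => this α), Finset.sum_add_distrib,
      Finset.sum_const, Finset.card_univ, ZMod.card, nsmul_eq_mul]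
  rw [hLHS, hRHS] at hsum
  have hT : (0 : ℝ) < T := by
    exact_mod_cast Nat.pos_of_ne_zero (NeZero.ne T)
  have hlog : 0 ≤ Real.log (η t) := by nlinarith
  calc (1 : ℝ) = Real.exp 0 := Real.exp_zero.symm
    _ ≤ Real.exp (Real.log (η t)) := Real.exp_le_exp.mpr hlog
    _ = η t := Real.exp_log hηpos
end

section
/- Let M be a kernel on a finite set S such that x^{3/2} M_{α,β}(x) → L_{α,β} ∈ [0,∞) as x → ∞ for all α,β (along the appropriate congruence class). Then for every k ≥ 1, x^{3/2}[M^{*k}]_{α,β}(x) → Σ_{i=0}^{k−1} [B^i · L · B^{(k−1)−i}]_{α,β} as x → ∞, where B_{α,β} = Σ_x M_{α,β}(x). -/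
open Filter Matrix

/-- Convolution of two matrix-valued kernels on `ℕ`. -/
noncomputable def kconv {S : Type*} [Fintype S]
    (F G : ℕ → Matrix S S ℝ) : ℕ → Matrix S S ℝ :=
  fun x => ∑ y ∈ Finset.range (x + 1), F y * G (x - y)

/-- `n`-fold convolution power of a kernel; `kpow M 0` is the identity kernel
concentrated at `x = 0`. -/
noncomputable def kpow {S : Type*} [Fintype S] [DecidableEq S]
    (M : ℕ → Matrix S S ℝ) : ℕ → ℕ → Matrix S S ℝ
  | 0 => fun x => if x = 0 then 1 else 0
  | n + 1 => kconv M (kpow M n)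

/-!
Split the convolution sum `∑_{y ≤ x} f y * g (x - y)` at `y = x / 2`. On the half `2 y ≤ x` we
have `x ≤ 2 (x - y)`, so `x ^ p • g (x - y)` is uniformly bounded and tends to `b` for each fixed
`y`; dominated convergence against the summable `f` gives `(∑ f) * b`. The other half gives
`a * ∑ g` in the same way. For `M * M^{*k}` the total masses multiply (Cauchy product), so the
limits satisfy `T (k + 1) = B * T k + L * B ^ k` with `T 0 = 0`, which is solved by
`T k = ∑_{i < k} B ^ i * L * B ^ (k - 1 - i)`.
-/

open Topology Finset

lemma tendsto_sum_range_of_dominated_convergence {G : Type*} [NormedAddCommGroup G]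
    [CompleteSpace G] {F : ℕ → ℕ → G} {c : ℕ → G} {bound : ℕ → ℝ} (h_sum : Summable bound)
    (hF : ∀ y, Tendsto (F · y) atTop (𝓝 (c y))) (h_bound : ∀ x y, y ≤ x → ‖F x y‖ ≤ bound y) :
    Tendsto (fun x ↦ ∑ y ∈ range (x + 1), F x y) atTop (𝓝 (∑' y, c y)) := by
  have h_trunc : ∀ y, Tendsto (fun x ↦ if y ≤ x then F x y else 0) atTop (𝓝 (c y)) :=
    fun y ↦ (hF y).congr' <| (eventually_ge_atTop y).mono fun x hx ↦ (if_pos hx).symm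
  have h_bound' : ∀ᶠ x in atTop, ∀ y, ‖if y ≤ x then F x y else 0‖ ≤ bound y := by
    refine .of_forall fun x y ↦ ?_
    split_ifs with hy
    · exact h_bound x y hy
    · simpa using (norm_nonneg _).trans (h_bound y y le_rfl)
  refine (tendsto_tsum_of_dominated_convergence h_sum h_trunc h_bound').congr fun x ↦ ?_
  rw [tsum_eq_sum (s := range (x + 1)) fun y hy ↦ if_neg (by simpa using hy)]
  exact sum_congr rfl fun y hy ↦ if_pos (by simpa [Nat.lt_succ_iff] using hy)

section TailAsymptotics

variable {E : Type*} [NormedAddCommGroup E] [NormedSpace ℝ E] {g : ℕ → E} {b : E} {p : ℝ}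

lemma tendsto_rpow_smul_comp_sub
    (hg : Tendsto (fun x : ℕ ↦ (x : ℝ) ^ p • g x) atTop (𝓝 b)) (y : ℕ) :
    Tendsto (fun x : ℕ ↦ (x : ℝ) ^ p • g (x - y)) atTop (𝓝 b) := by
  have h_ratio : Tendsto (fun x : ℕ ↦ (((x - y : ℕ) : ℝ) + y) / (x - y : ℕ)) atTop (𝓝 1) := by
    simpa using ((tendsto_natCast_div_add_atTop (y : ℝ)).comp (tendsto_sub_atTop_nat y)).inv₀
      one_ne_zero
  have := (h_ratio.rpow_const (p := p) (Or.inl one_ne_zero)).smul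
    (hg.comp (tendsto_sub_atTop_nat y))
  rw [Real.one_rpow, one_smul] at this
  refine this.congr' <| (eventually_gt_atTop y).mono fun x hx ↦ ?_
  have hxy : (0 : ℝ) < (x - y : ℕ) := by exact_mod_cast Nat.sub_pos_of_lt hx
  rw [← Nat.cast_add, Nat.sub_add_cancel hx.le, Function.comp_apply, smul_smul,
    Real.div_rpow (Nat.cast_nonneg _) hxy.le, div_mul_cancel₀ _ (by positivity)]

lemma exists_norm_rpow_smul_comp_sub_le (hp : 0 ≤ p)
    (hg : Tendsto (fun x : ℕ ↦ (x : ℝ) ^ p • g x) atTop (𝓝 b)) :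
    ∃ C, ∀ x y : ℕ, 2 * y ≤ x → ‖(x : ℝ) ^ p • g (x - y)‖ ≤ C := by
  obtain ⟨C, hC⟩ := hg.norm.bddAbove_range
  refine ⟨2 ^ p * C, fun x y hxy ↦ ?_⟩
  have hx : (x : ℝ) ≤ 2 * (x - y : ℕ) := by exact_mod_cast (by omega : x ≤ 2 * (x - y))
  calc ‖(x : ℝ) ^ p • g (x - y)‖ = (x : ℝ) ^ p * ‖g (x - y)‖ := by
        rw [norm_smul, Real.norm_of_nonneg (by positivity)]
    _ ≤ (2 * (x - y : ℕ) : ℝ) ^ p * ‖g (x - y)‖ := by gcongr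
    _ = 2 ^ p * ‖((x - y : ℕ) : ℝ) ^ p • g (x - y)‖ := by
        rw [Real.mul_rpow (by norm_num) (Nat.cast_nonneg _), norm_smul,
          Real.norm_of_nonneg (by positivity), mul_assoc]
    _ ≤ 2 ^ p * C := by gcongr; exact hC (Set.mem_range_self _)

end TailAsymptotics

section Convolution

variable {R : Type*} [NormedRing R] [NormedAlgebra ℝ R] {f g : ℕ → R} {a b : R} {p : ℝ}

lemma rpow_smul_sum_range_mul_eq (x : ℕ) :
    (x : ℝ) ^ p • ∑ y ∈ range (x + 1), f y * g (x - y) =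
      (∑ y ∈ range (x + 1), if 2 * y ≤ x then f y * ((x : ℝ) ^ p • g (x - y)) else 0) +
        ∑ z ∈ range (x + 1), if 2 * z < x then ((x : ℝ) ^ p • f (x - z)) * g z else 0 := by
  rw [← sum_range_reflect (fun z ↦ if 2 * z < x then _ else 0), ← sum_add_distrib, smul_sum]
  refine sum_congr rfl fun y hy ↦ ?_
  have hyx : y ≤ x := Nat.lt_succ_iff.mp (mem_range.mp hy)
  rw [Nat.add_sub_cancel, Nat.sub_sub_self hyx]
  by_cases h : 2 * y ≤ x
  · rw [if_pos h, if_neg (by omega), add_zero, mul_smul_comm]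
  · rw [if_neg h, if_pos (by omega), zero_add, smul_mul_assoc]

variable [CompleteSpace R]

lemma tendsto_sum_range_mul_rpow_smul_comp_sub (hp : 0 ≤ p) (hf : Summable (‖f ·‖))
    (hg : Tendsto (fun x : ℕ ↦ (x : ℝ) ^ p • g x) atTop (𝓝 b)) :
    Tendsto (fun x : ℕ ↦ ∑ y ∈ range (x + 1),
        if 2 * y ≤ x then f y * ((x : ℝ) ^ p • g (x - y)) else 0)
      atTop (𝓝 ((∑' y, f y) * b)) := by
  obtain ⟨C, hC⟩ := exists_norm_rpow_smul_comp_sub_le hp hg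
  rw [← hf.of_norm.tsum_mul_right]
  refine tendsto_sum_range_of_dominated_convergence (hf.mul_right C) (fun y ↦ ?_)
    fun x y _ ↦ ?_
  · refine ((tendsto_rpow_smul_comp_sub hg y).const_mul (f y)).congr' ?_
    filter_upwards [eventually_ge_atTop (2 * y)] with x hx using (if_pos hx).symm
  · split_ifs with hy
    · exact (norm_mul_le _ _).trans (by gcongr; exact hC x y hy)
    · simpa using mul_nonneg (norm_nonneg (f y)) ((norm_nonneg _).trans (hC (2 * y) y le_rfl))

lemma tendsto_sum_range_rpow_smul_comp_sub_mul (hp : 0 ≤ p) (hg : Summable (‖g ·‖))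
    (hf : Tendsto (fun x : ℕ ↦ (x : ℝ) ^ p • f x) atTop (𝓝 a)) :
    Tendsto (fun x : ℕ ↦ ∑ z ∈ range (x + 1),
        if 2 * z < x then ((x : ℝ) ^ p • f (x - z)) * g z else 0)
      atTop (𝓝 (a * ∑' z, g z)) := by
  obtain ⟨C, hC⟩ := exists_norm_rpow_smul_comp_sub_le hp hf
  rw [← hg.of_norm.tsum_mul_left]
  refine tendsto_sum_range_of_dominated_convergence (hg.mul_left C) (fun z ↦ ?_)
    fun x z _ ↦ ?_
  · refine ((tendsto_rpow_smul_comp_sub hf z).mul_const (g z)).congr' ?_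
    filter_upwards [eventually_gt_atTop (2 * z)] with x hx using (if_pos hx).symm
  · split_ifs with hz
    · exact (norm_mul_le _ _).trans (by gcongr; exact hC x z hz.le)
    · simpa using mul_nonneg ((norm_nonneg _).trans (hC (2 * z) z le_rfl)) (norm_nonneg (g z))

theorem tendsto_rpow_smul_sum_range_mul (hp : 0 ≤ p) (hf : Summable (‖f ·‖))
    (hg : Summable (‖g ·‖)) (ha : Tendsto (fun x : ℕ ↦ (x : ℝ) ^ p • f x) atTop (𝓝 a))
    (hb : Tendsto (fun x : ℕ ↦ (x : ℝ) ^ p • g x) atTop (𝓝 b)) :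
    Tendsto (fun x : ℕ ↦ (x : ℝ) ^ p • ∑ y ∈ range (x + 1), f y * g (x - y)) atTop
      (𝓝 ((∑' y, f y) * b + a * ∑' y, g y)) := by
  simpa only [rpow_smul_sum_range_mul_eq] using
    (tendsto_sum_range_mul_rpow_smul_comp_sub hp hf hb).add
      (tendsto_sum_range_rpow_smul_comp_sub_mul hp hg ha)

end Convolution

lemma sum_range_succ_pow_mul_mul_pow {R : Type*} [Semiring R] (a b c : R) (k : ℕ) :
    ∑ i ∈ range (k + 1), a ^ i * c * b ^ (k + 1 - 1 - i) =
      a * ∑ i ∈ range k, a ^ i * c * b ^ (k - 1 - i) + c * b ^ k := by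
  rw [sum_range_succ', mul_sum]
  congr 1
  · refine sum_congr rfl fun i _ ↦ ?_
    rw [pow_succ', show k + 1 - 1 - (i + 1) = k - 1 - i by omega, mul_assoc, mul_assoc,
      mul_assoc]
  · simp

section KernelPowers

attribute [local instance] Matrix.linftyOpNormedRing Matrix.linftyOpNormedAlgebra

variable {S : Type*} [Fintype S] [DecidableEq S] {M : ℕ → Matrix S S ℝ} {B : Matrix S S ℝ}

lemma summable_norm_of_hasSum {F : ℕ → Matrix S S ℝ} {A : Matrix S S ℝ} (h : HasSum F A) :
    Summable (‖F ·‖) :=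
  summable_norm_iff.mpr h.summable

lemma hasSum_kpow (hM : HasSum M B) (k : ℕ) : HasSum (kpow M k) (B ^ k) := by
  induction k with
  | zero => exact hasSum_ite_eq 0 1
  | succ k ih =>
    have h := hasSum_sum_range_mul_of_summable_norm (summable_norm_of_hasSum hM)
      (summable_norm_of_hasSum ih)
    -- `erw`: these sums are taken in the `linftyOp` normed topology, which is the product
    -- topology only up to unfolding.
    erw [hM.tsum_eq, ih.tsum_eq, ← pow_succ'] at h
    exact h

lemma tendsto_rpow_smul_kpow {p : ℝ} {L : Matrix S S ℝ} (hp : 0 ≤ p) (hM : HasSum M B)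
    (htail : Tendsto (fun x : ℕ ↦ (x : ℝ) ^ p • M x) atTop (𝓝 L)) (k : ℕ) :
    Tendsto (fun x : ℕ ↦ (x : ℝ) ^ p • kpow M k x) atTop
      (𝓝 (∑ i ∈ range k, B ^ i * L * B ^ (k - 1 - i))) := by
  induction k with
  | zero =>
    refine tendsto_const_nhds.congr' ?_
    filter_upwards [eventually_ne_atTop 0] with x hx
    simp [kpow, hx]
  | succ k ih =>
    have h := tendsto_rpow_smul_sum_range_mul hp (summable_norm_of_hasSum hM)
      (summable_norm_of_hasSum (hasSum_kpow hM k)) htail ih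
    erw [hM.tsum_eq, (hasSum_kpow hM k).tsum_eq, ← sum_range_succ_pow_mul_mul_pow] at h
    exact h

end KernelPowers

theorem kernel_convolution_tail_asymptotics_general
    {S : Type*} [Fintype S] [DecidableEq S]
    (M : ℕ → Matrix S S ℝ) (L B : Matrix S S ℝ)
    (htail : ∀ α β, Filter.Tendsto (fun x : ℕ => (x : ℝ) ^ ((3 : ℝ) / 2) * M x α β)
      Filter.atTop (nhds (L α β)))
    (hB : ∀ α β, HasSum (fun x : ℕ => M x α β) (B α β)) :
    ∀ k : ℕ, 1 ≤ k → ∀ α β : S,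
      Filter.Tendsto (fun x : ℕ => (x : ℝ) ^ ((3 : ℝ) / 2) * (kpow M k) x α β)
        Filter.atTop
        (nhds (∑ i ∈ Finset.range k, (B ^ i * L * B ^ (k - 1 - i)) α β)) := by
  have hM : HasSum M B := Pi.hasSum.2 fun α ↦ Pi.hasSum.2 (hB α)
  have hMtail : Tendsto (fun x : ℕ ↦ (x : ℝ) ^ ((3 : ℝ) / 2) • M x) atTop (𝓝 L) :=
    tendsto_pi_nhds.2 fun α ↦ tendsto_pi_nhds.2 (htail α)
  intro k _ α β
  simpa [Matrix.sum_apply] using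
    ((tendsto_rpow_smul_kpow (by norm_num) hM hMtail k).apply_nhds α).apply_nhds β

/-- If `x^{3/2} M_{α,β}(x) → L_{α,β}` as `x → ∞`, then for every `k ≥ 1`,
`x^{3/2}[M^{*k}]_{α,β}(x) → Σ_{i=0}^{k-1} [B^i L B^{k-1-i}]_{α,β}`, where `B` is the
matrix of total masses. -/
theorem kernel_convolution_tail_asymptotics
    {S : Type*} [Fintype S] [DecidableEq S]
    (M : ℕ → Matrix S S ℝ) (L B : Matrix S S ℝ)
    (hM : ∀ x α β, 0 ≤ M x α β)
    (hL : ∀ α β, 0 ≤ L α β)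
    (htail : ∀ α β, Filter.Tendsto (fun x : ℕ => (x : ℝ) ^ ((3 : ℝ) / 2) * M x α β)
      Filter.atTop (nhds (L α β)))
    (hB : ∀ α β, HasSum (fun x : ℕ => M x α β) (B α β)) :
    ∀ k : ℕ, 1 ≤ k → ∀ α β : S,
      Filter.Tendsto (fun x : ℕ => (x : ℝ) ^ ((3 : ℝ) / 2) * (kpow M k) x α β)
        Filter.atTop
        (nhds (∑ i ∈ Finset.range k, (B ^ i * L * B ^ (k - 1 - i)) α β)) :=
  kernel_convolution_tail_asymptotics_general M L B htail hB
end

section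
/- Under the same hypotheses, there is a constant C > 0 such that x^{3/2}[M^{*k}]_{α,β}(x) ≤ C k³ [B^k]_{α,β} for all α, β ∈ S and all x, k ∈ ℕ with k ≥ 1. -/
open Filter Matrix

section Aux

variable {S : Type*} [Fintype S] [DecidableEq S]

lemma kpow_apply_succ (M : ℕ → Matrix S S ℝ) (n x : ℕ) (α β : S) :
    kpow M (n + 1) x α β
      = ∑ y ∈ Finset.range (x + 1), ∑ γ, M y α γ * kpow M n (x - y) γ β := by
  simp only [kpow, kconv, Matrix.sum_apply, Matrix.mul_apply]

lemma kpow_nonneg (M : ℕ → Matrix S S ℝ) (hM : ∀ x α β, 0 ≤ M x α β) :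
    ∀ k x α β, 0 ≤ kpow M k x α β := by
  intro k
  induction k with
  | zero =>
    intro x α β
    simp only [kpow]
    split
    · rw [Matrix.one_apply]
      split <;> norm_num
    · simp
  | succ n ih =>
    intro x α β
    rw [kpow_apply_succ]
    refine Finset.sum_nonneg fun y _ => Finset.sum_nonneg fun γ _ => ?_
    exact mul_nonneg (hM y α γ) (ih (x - y) γ β)

lemma hasSum_kpow_s9 (M : ℕ → Matrix S S ℝ) (B : Matrix S S ℝ)
    (hM : ∀ x α β, 0 ≤ M x α β)
    (hB : ∀ α β, HasSum (fun x : ℕ => M x α β) (B α β)) :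
    ∀ k α β, HasSum (fun x => kpow M k x α β) ((B ^ k) α β) := by
  intro k
  induction k with
  | zero =>
    intro α β
    have h : (fun x : ℕ => kpow M 0 x α β)
        = fun x : ℕ => if x = 0 then (1 : Matrix S S ℝ) α β else 0 := by
      funext x
      simp only [kpow]
      split <;> simp
    rw [h, pow_zero]
    exact hasSum_ite_eq 0 _
  | succ n ih =>
    intro α β
    have key : ∀ γ : S,
        HasSum (fun x : ℕ => ∑ y ∈ Finset.range (x + 1), M y α γ * kpow M n (x - y) γ β)
          (B α γ * (B ^ n) γ β) := by
      intro γ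
      have h1 := hB α γ
      have h2 := ih γ β
      have hn1 : Summable fun y : ℕ => ‖M y α γ‖ := by
        have := h1.summable.abs
        simpa [Real.norm_eq_abs] using this
      have hn2 : Summable fun y : ℕ => ‖kpow M n y γ β‖ := by
        have := h2.summable.abs
        simpa [Real.norm_eq_abs] using this
      have := hasSum_sum_range_mul_of_summable_norm hn1 hn2
      rwa [h1.tsum_eq, h2.tsum_eq] at this
    have hsum := hasSum_sum (f := fun (γ : S) (x : ℕ) =>
        ∑ y ∈ Finset.range (x + 1), M y α γ * kpow M n (x - y) γ β)
      (s := Finset.univ) (fun γ _ => key γ)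
    have hgoal : (fun x : ℕ => kpow M (n + 1) x α β)
        = fun x : ℕ => ∑ γ, ∑ y ∈ Finset.range (x + 1), M y α γ * kpow M n (x - y) γ β := by
      funext x
      rw [kpow_apply_succ, Finset.sum_comm]
    rw [hgoal, pow_succ', Matrix.mul_apply]
    exact hsum

end Aux

/-- Uniform bound: there is `C > 0` with
`x^{3/2}[M^{*k}]_{α,β}(x) ≤ C k³ [B^k]_{α,β}` for all `α, β`, all `x` and all `k ≥ 1`. -/
theorem kernel_convolution_uniform_bound
    {S : Type*} [Fintype S] [DecidableEq S]
    (M : ℕ → Matrix S S ℝ) (B : Matrix S S ℝ)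
    (hM : ∀ x α β, 0 ≤ M x α β)
    (hMbdd : ∀ α β, ∃ c : ℝ, ∀ x : ℕ, (x : ℝ) ^ ((3 : ℝ) / 2) * M x α β ≤ c)
    (hB : ∀ α β, HasSum (fun x : ℕ => M x α β) (B α β)) :
    ∃ C : ℝ, 0 < C ∧ ∀ (α β : S) (x k : ℕ), 1 ≤ k →
      (x : ℝ) ^ ((3 : ℝ) / 2) * (kpow M k) x α β ≤ C * (k : ℝ) ^ 3 * (B ^ k) α β := by
  classical
  -- basic positivity facts
  have hBnn : ∀ α β, 0 ≤ B α β := fun α β =>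
    hasSum_le (fun x => hM x α β) hasSum_zero (hB α β)
  have hBknn : ∀ (k : ℕ) (α β : S), 0 ≤ (B ^ k) α β := fun k α β =>
    hasSum_le (fun x => kpow_nonneg M hM k x α β) hasSum_zero (hasSum_kpow_s9 M B hM hB k α β)
  have hMleB : ∀ x α β, M x α β ≤ B α β := by
    intro x α β
    have := sum_le_hasSum {x} (fun b _ => hM b α β) (hB α β)
    simpa using this
  -- choose bounding constants
  choose c₀ hc₀ using hMbdd
  have hc₀nn : ∀ α β, 0 ≤ c₀ α β := by
    intro α β
    have := hc₀ α β 0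
    simpa [Real.zero_rpow (by norm_num : (3:ℝ)/2 ≠ 0)] using this
  set c1 : S → S → ℝ := fun α β => if B α β = 0 then 0 else c₀ α β / B α β with hc1
  set C : ℝ := 1 + ∑ p : S × S, max 0 (c1 p.1 p.2) with hC
  have hC1 : 1 ≤ C := by
    rw [hC]
    have : (0:ℝ) ≤ ∑ p : S × S, max 0 (c1 p.1 p.2) :=
      Finset.sum_nonneg fun p _ => le_max_left 0 _
    linarith
  have hC0 : 0 < C := lt_of_lt_of_le one_pos hC1
  have hkey : ∀ (x : ℕ) (α β : S), (x : ℝ) ^ ((3:ℝ)/2) * M x α β ≤ C * B α β := by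
    intro x α β
    by_cases h : B α β = 0
    · have hM0 : M x α β = 0 := le_antisymm (h ▸ hMleB x α β) (hM x α β)
      simp [hM0, h]
    · have hBpos : 0 < B α β := lt_of_le_of_ne (hBnn α β) (Ne.symm h)
      have h1 : (x : ℝ) ^ ((3:ℝ)/2) * M x α β ≤ c₀ α β := hc₀ α β x
      have h2 : c₀ α β = (c₀ α β / B α β) * B α β := by
        field_simp
      have h3 : c1 α β ≤ C := by
        rw [hC]
        have hmem : ((α, β) : S × S) ∈ (Finset.univ : Finset (S × S)) := Finset.mem_univ _
        have := Finset.single_le_sum (f := fun p : S × S => max 0 (c1 p.1 p.2))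
          (fun p _ => le_max_left 0 _) hmem
        have h4 : c1 α β ≤ max 0 (c1 α β) := le_max_right 0 _
        simp only at this
        linarith
      calc (x : ℝ) ^ ((3:ℝ)/2) * M x α β ≤ c₀ α β := h1
        _ = (c₀ α β / B α β) * B α β := h2
        _ = c1 α β * B α β := by rw [hc1]; simp [h]
        _ ≤ C * B α β := mul_le_mul_of_nonneg_right h3 (hBnn α β)
  -- partial sum bounds
  have hMsum : ∀ (s : Finset ℕ) (α β : S), ∑ y ∈ s, M y α β ≤ B α β := fun s α β =>
    sum_le_hasSum s (fun b _ => hM b α β) (hB α β)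
  have hKsum : ∀ (k : ℕ) (s : Finset ℕ) (γ β : S), ∑ y ∈ s, kpow M k y γ β ≤ (B ^ k) γ β :=
    fun k s γ β => sum_le_hasSum s (fun b _ => kpow_nonneg M hM k b γ β)
      (hasSum_kpow_s9 M B hM hB k γ β)
  -- main induction
  have main : ∀ k : ℕ, 1 ≤ k → ∀ (x : ℕ) (α β : S),
      (x : ℝ) ^ ((3:ℝ)/2) * kpow M k x α β
        ≤ C * k * (k : ℝ) ^ ((3:ℝ)/2) * (B ^ k) α β := by
    intro k hk1
    induction k, hk1 using Nat.le_induction with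
    | base =>
      intro x α β
      have h1 : kpow M 1 x = M x := by
        show kconv M (kpow M 0) x = M x
        unfold kconv
        rw [Finset.sum_eq_single x]
        · simp [kpow]
        · intro y hy hne
          have : x - y ≠ 0 := by
            rw [Finset.mem_range] at hy
            omega
          simp [kpow, this]
        · intro h; exact absurd (Finset.self_mem_range_succ x) h
      rw [h1]
      simpa using hkey x α β
    | succ k hk ih =>
      intro x α β
      rw [kpow_apply_succ]
      rw [Finset.mul_sum]
      have hkR : (1:ℝ) ≤ (k:ℝ) := by exact_mod_cast hk
      have hkpos : (0:ℝ) < (k:ℝ) := by linarith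
      -- termwise bounds
      set A : ℕ → ℝ := fun y =>
        ((k:ℝ)+1) ^ ((3:ℝ)/2) * ∑ γ, (C * B α γ) * kpow M k (x - y) γ β with hA
      set D : ℕ → ℝ := fun y =>
        ((k:ℝ)+1) ^ ((3:ℝ)/2) * ∑ γ, M y α γ * (C * k * (B ^ k) γ β) with hD
      have hAnn : ∀ y, 0 ≤ A y := by
        intro y
        apply mul_nonneg (Real.rpow_nonneg (by linarith) _)
        exact Finset.sum_nonneg fun γ _ => mul_nonneg
          (mul_nonneg hC0.le (hBnn α γ)) (kpow_nonneg M hM k (x - y) γ β)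
      have hDnn : ∀ y, 0 ≤ D y := by
        intro y
        apply mul_nonneg (Real.rpow_nonneg (by linarith) _)
        exact Finset.sum_nonneg fun γ _ => mul_nonneg (hM y α γ)
          (mul_nonneg (mul_nonneg hC0.le hkpos.le) (hBknn k γ β))
      have hterm : ∀ y ∈ Finset.range (x + 1),
          (x:ℝ) ^ ((3:ℝ)/2) * ∑ γ, M y α γ * kpow M k (x - y) γ β ≤ A y + D y := by
        intro y hy
        rw [Finset.mem_range] at hy
        by_cases hcase : x ≤ (k + 1) * y
        · -- large y: use c bound on M y
          have hx32 : (x:ℝ) ^ ((3:ℝ)/2) ≤ ((k:ℝ)+1) ^ ((3:ℝ)/2) * (y:ℝ) ^ ((3:ℝ)/2) := by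
            have hxy : (x:ℝ) ≤ ((k:ℝ)+1) * (y:ℝ) := by exact_mod_cast hcase
            calc (x:ℝ) ^ ((3:ℝ)/2) ≤ (((k:ℝ)+1) * (y:ℝ)) ^ ((3:ℝ)/2) :=
                Real.rpow_le_rpow (Nat.cast_nonneg x) hxy (by norm_num)
              _ = ((k:ℝ)+1) ^ ((3:ℝ)/2) * (y:ℝ) ^ ((3:ℝ)/2) :=
                Real.mul_rpow (by linarith) (Nat.cast_nonneg y)
          have : (x:ℝ) ^ ((3:ℝ)/2) * ∑ γ, M y α γ * kpow M k (x - y) γ β ≤ A y := by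
            simp only [hA, Finset.mul_sum]
            apply Finset.sum_le_sum
            intro γ _
            have h0 : 0 ≤ M y α γ * kpow M k (x - y) γ β :=
              mul_nonneg (hM y α γ) (kpow_nonneg M hM k (x - y) γ β)
            calc (x:ℝ) ^ ((3:ℝ)/2) * (M y α γ * kpow M k (x - y) γ β)
                ≤ (((k:ℝ)+1) ^ ((3:ℝ)/2) * (y:ℝ) ^ ((3:ℝ)/2))
                    * (M y α γ * kpow M k (x - y) γ β) :=
                  mul_le_mul_of_nonneg_right hx32 h0
              _ = ((k:ℝ)+1) ^ ((3:ℝ)/2) *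
                    (((y:ℝ) ^ ((3:ℝ)/2) * M y α γ) * kpow M k (x - y) γ β) := by ring
              _ ≤ ((k:ℝ)+1) ^ ((3:ℝ)/2) * ((C * B α γ) * kpow M k (x - y) γ β) := by
                  apply mul_le_mul_of_nonneg_left _ (Real.rpow_nonneg (by linarith) _)
                  exact mul_le_mul_of_nonneg_right (hkey y α γ)
                    (kpow_nonneg M hM k (x - y) γ β)
          linarith [hDnn y]
        · -- small y: use induction hypothesis on x - y
          push_neg at hcase
          have hylt : y < x := lt_of_le_of_lt (Nat.le_mul_of_pos_left y (by omega)) hcase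
          have hsubcast : ((x - y : ℕ) : ℝ) = (x:ℝ) - (y:ℝ) := by
            rw [Nat.cast_sub hylt.le]
          have hxle : (x:ℝ) ≤ (((k:ℝ)+1)/(k:ℝ)) * ((x:ℝ) - (y:ℝ)) := by
            have h1 : ((k:ℝ)+1) * (y:ℝ) < (x:ℝ) := by exact_mod_cast hcase
            rw [div_mul_eq_mul_div, le_div_iff₀ hkpos]
            nlinarith
          have hxynn : (0:ℝ) ≤ (x:ℝ) - (y:ℝ) := by
            have : (y:ℝ) ≤ (x:ℝ) := by exact_mod_cast hylt.le
            linarith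
          have hx32 : (x:ℝ) ^ ((3:ℝ)/2)
              ≤ (((k:ℝ)+1)/(k:ℝ)) ^ ((3:ℝ)/2) * ((x:ℝ) - (y:ℝ)) ^ ((3:ℝ)/2) := by
            calc (x:ℝ) ^ ((3:ℝ)/2) ≤ ((((k:ℝ)+1)/(k:ℝ)) * ((x:ℝ) - (y:ℝ))) ^ ((3:ℝ)/2) :=
                Real.rpow_le_rpow (Nat.cast_nonneg x) hxle (by norm_num)
              _ = (((k:ℝ)+1)/(k:ℝ)) ^ ((3:ℝ)/2) * ((x:ℝ) - (y:ℝ)) ^ ((3:ℝ)/2) :=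
                Real.mul_rpow (by positivity) hxynn
          have hratio : (((k:ℝ)+1)/(k:ℝ)) ^ ((3:ℝ)/2) * (k:ℝ) ^ ((3:ℝ)/2)
              = ((k:ℝ)+1) ^ ((3:ℝ)/2) := by
            rw [Real.div_rpow (by linarith) hkpos.le]
            field_simp
          have : (x:ℝ) ^ ((3:ℝ)/2) * ∑ γ, M y α γ * kpow M k (x - y) γ β ≤ D y := by
            simp only [hD, Finset.mul_sum]
            apply Finset.sum_le_sum
            intro γ _
            have ihγ := ih (x - y) γ β
            rw [hsubcast] at ihγ
            have h0 : 0 ≤ M y α γ := hM y α γ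
            calc (x:ℝ) ^ ((3:ℝ)/2) * (M y α γ * kpow M k (x - y) γ β)
                ≤ ((((k:ℝ)+1)/(k:ℝ)) ^ ((3:ℝ)/2) * ((x:ℝ) - (y:ℝ)) ^ ((3:ℝ)/2))
                    * (M y α γ * kpow M k (x - y) γ β) := by
                  apply mul_le_mul_of_nonneg_right hx32
                  exact mul_nonneg h0 (kpow_nonneg M hM k (x - y) γ β)
              _ = (((k:ℝ)+1)/(k:ℝ)) ^ ((3:ℝ)/2) * M y α γ
                    * (((x:ℝ) - (y:ℝ)) ^ ((3:ℝ)/2) * kpow M k (x - y) γ β) := by ring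
              _ ≤ (((k:ℝ)+1)/(k:ℝ)) ^ ((3:ℝ)/2) * M y α γ
                    * (C * (k:ℝ) * (k:ℝ) ^ ((3:ℝ)/2) * (B ^ k) γ β) := by
                  apply mul_le_mul_of_nonneg_left ihγ
                  exact mul_nonneg (Real.rpow_nonneg (by positivity) _) h0
              _ = ((((k:ℝ)+1)/(k:ℝ)) ^ ((3:ℝ)/2) * (k:ℝ) ^ ((3:ℝ)/2))
                    * (M y α γ * (C * (k:ℝ) * (B ^ k) γ β)) := by ring
              _ = ((k:ℝ)+1) ^ ((3:ℝ)/2) * (M y α γ * (C * (k:ℝ) * (B ^ k) γ β)) := by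
                  rw [hratio]
          linarith [hAnn y]
      -- sum the termwise bounds
      calc ∑ y ∈ Finset.range (x + 1),
            (x:ℝ) ^ ((3:ℝ)/2) * ∑ γ, M y α γ * kpow M k (x - y) γ β
          ≤ ∑ y ∈ Finset.range (x + 1), (A y + D y) := Finset.sum_le_sum hterm
        _ = (∑ y ∈ Finset.range (x + 1), A y) + ∑ y ∈ Finset.range (x + 1), D y :=
            Finset.sum_add_distrib
        _ ≤ ((k:ℝ)+1) ^ ((3:ℝ)/2) * C * (B ^ (k+1)) α β
            + ((k:ℝ)+1) ^ ((3:ℝ)/2) * (C * (k:ℝ)) * (B ^ (k+1)) α β := by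
            apply add_le_add
            · -- sum of A
              have hsw : ∀ γ : S, ∑ y ∈ Finset.range (x + 1), kpow M k (x - y) γ β
                  ≤ (B ^ k) γ β := by
                intro γ
                have hrefl := Finset.sum_range_reflect (fun w => kpow M k w γ β) (x+1)
                simp only [Nat.add_sub_cancel] at hrefl
                rw [hrefl]
                exact hKsum k (Finset.range (x+1)) γ β
              calc ∑ y ∈ Finset.range (x + 1), A y
                  = ((k:ℝ)+1) ^ ((3:ℝ)/2) * ∑ γ, (C * B α γ)
                      * ∑ y ∈ Finset.range (x + 1), kpow M k (x - y) γ β := by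
                    rw [hA, ← Finset.mul_sum, Finset.sum_comm]
                    congr 1
                    apply Finset.sum_congr rfl
                    intro γ _
                    rw [Finset.mul_sum]
                _ ≤ ((k:ℝ)+1) ^ ((3:ℝ)/2) * ∑ γ, (C * B α γ) * (B ^ k) γ β := by
                    apply mul_le_mul_of_nonneg_left _ (Real.rpow_nonneg (by linarith) _)
                    apply Finset.sum_le_sum
                    intro γ _
                    exact mul_le_mul_of_nonneg_left (hsw γ)
                      (mul_nonneg hC0.le (hBnn α γ))
                _ = ((k:ℝ)+1) ^ ((3:ℝ)/2) * C * (B ^ (k+1)) α β := by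
                    simp only [pow_succ', Matrix.mul_apply, Finset.mul_sum]
                    exact Finset.sum_congr rfl fun γ _ => by ring
            · -- sum of D
              calc ∑ y ∈ Finset.range (x + 1), D y
                  = ((k:ℝ)+1) ^ ((3:ℝ)/2) * ∑ γ, (∑ y ∈ Finset.range (x + 1), M y α γ)
                      * (C * (k:ℝ) * (B ^ k) γ β) := by
                    rw [hD, ← Finset.mul_sum, Finset.sum_comm]
                    congr 1
                    apply Finset.sum_congr rfl
                    intro γ _
                    rw [Finset.sum_mul]
                _ ≤ ((k:ℝ)+1) ^ ((3:ℝ)/2) * ∑ γ, B α γ * (C * (k:ℝ) * (B ^ k) γ β) := by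
                    apply mul_le_mul_of_nonneg_left _ (Real.rpow_nonneg (by linarith) _)
                    apply Finset.sum_le_sum
                    intro γ _
                    exact mul_le_mul_of_nonneg_right (hMsum (Finset.range (x+1)) α γ)
                      (mul_nonneg (mul_nonneg hC0.le hkpos.le) (hBknn k γ β))
                _ = ((k:ℝ)+1) ^ ((3:ℝ)/2) * (C * (k:ℝ)) * (B ^ (k+1)) α β := by
                    simp only [pow_succ', Matrix.mul_apply, Finset.mul_sum]
                    exact Finset.sum_congr rfl fun γ _ => by ring
        _ = C * ((k:ℕ)+1 : ℕ) * (((k:ℕ)+1 : ℕ) : ℝ) ^ ((3:ℝ)/2) * (B ^ (k+1)) α β := by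
            push_cast
            ring
  -- conclude
  refine ⟨C, hC0, fun α β x k hk => ?_⟩
  have h1 := main k hk x α β
  have hkR : (1:ℝ) ≤ (k:ℝ) := by exact_mod_cast hk
  have h2 : (k:ℝ) ^ ((3:ℝ)/2) ≤ (k:ℝ) ^ (2:ℕ) := by
    have := Real.rpow_le_rpow_of_exponent_le hkR (by norm_num : (3:ℝ)/2 ≤ 2)
    rwa [Real.rpow_two] at this
  have h3 : C * (k:ℝ) * (k:ℝ) ^ ((3:ℝ)/2) * (B ^ k) α β ≤ C * (k:ℝ) ^ 3 * (B ^ k) α β := by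
    apply mul_le_mul_of_nonneg_right _ (hBknn k α β)
    have : C * (k:ℝ) * (k:ℝ) ^ ((3:ℝ)/2) ≤ C * (k:ℝ) * (k:ℝ) ^ (2:ℕ) :=
      mul_le_mul_of_nonneg_left h2 (by positivity)
    calc C * (k:ℝ) * (k:ℝ) ^ ((3:ℝ)/2) ≤ C * (k:ℝ) * (k:ℝ) ^ (2:ℕ) := this
      _ = C * (k:ℝ) ^ 3 := by ring
  exact h1.trans h3
end
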